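/- Let F be a number field, E/F a finite extension, 𝔭 a finite place of F, and l, k positive integers. Suppose ν: (∏₁ⁿ E_𝔭^×) → T(F_𝔭) and μ: T(F_𝔭) → ∏₁ⁿ E_𝔭^× are continuous group homomorphisms with ν ∘ μ = [l] (the l-th power map on T(F_𝔭)), and let C be an open subgroup of ker ν. Then C · μ([k]T(F_𝔭)) is an open subgroup of ∏₁ⁿ E_𝔭^× for the 𝔭-adic topology, where E_𝔭 = E ⊗_F F_𝔭. -/

import Mathlib

/-!
The map `g ↦ g ^ (l * k) * μ (ν g ^ k)⁻¹` is continuous, fixes `1` and takes values in `ker ν`,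
so it pulls `C`, a neighbourhood of `1` in `ker ν`, back to a neighbourhood `W` of `1`; and
`g ^ (l * k)` lies in `C ⬝ μ (T ^ k)` for every `g ∈ W`. It remains to see that the
`(l * k)`-th powers of a neighbourhood of `1` in `∏ E_𝔭^×` form a neighbourhood of `1`.
There are finitely many coordinates, and in each completion `E_w` this is the inverse
function theorem (Hensel's lemma) for `x ↦ x ^ (l * k)` at `1`, whose derivative `l * k`
is nonzero since `E_w` has characteristic zero.
-/

open IsDedekindDomain NumberField

/-- The group `∏₁ⁿ E_𝔭^×`: the unit group of `∏₁ⁿ E ⊗_F F_𝔭`, where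
`E ⊗_F F_𝔭 ≅ ∏_{w ∣ 𝔭} E_w` is the product of the completions of `E` at the places
above `𝔭`, with its `𝔭`-adic topology. -/
abbrev LocalUnitsProd (F : Type*) [Field F] [NumberField F]
    (v : IsDedekindDomain.HeightOneSpectrum (𝓞 F))
    (E : Type*) [Field E] [NumberField E] [Algebra F E] (n : ℕ) : Type _ :=
  (Fin n → ∀ w : {w : HeightOneSpectrum (𝓞 E) //
      w.asIdeal.comap (algebraMap (𝓞 F) (𝓞 E)) = v.asIdeal},
      (w.1.adicCompletion E))ˣ

open Filter Topology

theorem map_pow_nhds_one_of_natCast_ne_zero {𝕜 : Type*} [NontriviallyNormedField 𝕜]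
    [CompleteSpace 𝕜] {m : ℕ} (hm : (m : 𝕜) ≠ 0) : Filter.map (· ^ m) (𝓝 (1 : 𝕜)) = 𝓝 1 := by
  simpa using (hasStrictDerivAt_pow m (1 : 𝕜)).map_nhds_eq (by simpa using hm)

section PowNhdsOne

variable {G H : Type*} [Monoid G] [Monoid H] [TopologicalSpace G] [TopologicalSpace H] {m : ℕ}

theorem MonoidHom.map_pow_nhds_one_of_injective (f : G →* H) (hf : Function.Injective f)
    (hf_nhds : Filter.map f (𝓝 1) = 𝓝 1) (h : Filter.map (· ^ m) (𝓝 (1 : H)) = 𝓝 1) :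
    Filter.map (· ^ m) (𝓝 (1 : G)) = 𝓝 1 := by
  apply map_injective hf
  have hcomm : f ∘ (· ^ m) = (· ^ m) ∘ f := funext fun g => map_pow f g m
  rw [map_map, hcomm, ← map_map, hf_nhds, h]

theorem Units.map_pow_nhds_one [IsOpenUnits G] (h : Filter.map (· ^ m) (𝓝 (1 : G)) = 𝓝 1) :
    Filter.map (· ^ m) (𝓝 (1 : Gˣ)) = 𝓝 1 := by
  refine (Units.coeHom G).map_pow_nhds_one_of_injective Units.val_injective ?_ h
  exact IsOpenUnits.isOpenEmbedding_unitsVal.map_nhds_eq 1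

theorem Pi.map_pow_nhds_one {ι : Type*} [Finite ι] {M : ι → Type*} [∀ i, Monoid (M i)]
    [∀ i, TopologicalSpace (M i)] (h : ∀ i, Filter.map (· ^ m) (𝓝 (1 : M i)) = 𝓝 1) :
    Filter.map (· ^ m) (𝓝 (1 : ∀ i, M i)) = 𝓝 1 := by
  simp only [nhds_pi, Pi.one_apply]
  exact (map_piMap_pi_finite (fun i (x : M i) => x ^ m) _).trans (by simp only [h])

theorem Units.map_pow_nhds_one_pi {ι : Type*} [Finite ι] {M : ι → Type*} [∀ i, Monoid (M i)]
    [∀ i, TopologicalSpace (M i)] (h : ∀ i, Filter.map (· ^ m) (𝓝 (1 : (M i)ˣ)) = 𝓝 1) :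
    Filter.map (· ^ m) (𝓝 (1 : (∀ i, M i)ˣ)) = 𝓝 1 := by
  let e := ContinuousMulEquiv.piUnits (M := M)
  exact (e : (∀ i, M i)ˣ →* ∀ i, (M i)ˣ).map_pow_nhds_one_of_injective e.injective
    ((e.toHomeomorph.map_nhds_eq 1).trans (congrArg 𝓝 (map_one e))) (Pi.map_pow_nhds_one h)

end PowNhdsOne

theorem Subgroup.isOpen_sup_map_pow {G T : Type*} [Group G] [TopologicalSpace G]
    [IsTopologicalGroup G] [CommGroup T] {ν : G →* T} {μ : T →* G}
    (hμν : Continuous fun g => μ (ν g)) {l k : ℕ} (hνμ : ∀ t, ν (μ t) = t ^ l)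
    (hpow : 𝓝 (1 : G) ≤ Filter.map (· ^ (l * k)) (𝓝 1)) {C : Subgroup G}
    (hC : (C : Set G) ∈ 𝓝[ν.ker] 1) :
    IsOpen ((C ⊔ Subgroup.map (μ.comp (powMonoidHom k)) ⊤ : Subgroup G) : Set G) := by
  obtain ⟨U, hU, hUC⟩ := mem_nhdsWithin_iff_exists_mem_nhds_inter.mp hC
  set f : G → G := fun g => g ^ (l * k) * (μ (ν g) ^ k)⁻¹ with hf
  have hf_cont : Continuous f := (continuous_pow _).mul ((hμν.pow k).inv)
  have hf_ker : ∀ g, f g ∈ ν.ker := fun g => by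
    simp [hf, hνμ, ← pow_mul, mul_comm l k]
  have hW : f ⁻¹' U ∈ 𝓝 1 := hf_cont.continuousAt.preimage_mem_nhds (by simpa [hf] using hU)
  refine Subgroup.isOpen_of_mem_nhds _ (mem_of_superset (hpow (image_mem_map hW)) ?_)
  rintro _ ⟨g, hg, rfl⟩
  have hfac : g ^ (l * k) = f g * μ (ν g ^ k) := by simp [hf]
  simp only [hfac, SetLike.mem_coe]
  exact mul_mem (mem_sup_left (hUC ⟨hg, hf_ker g⟩)) (mem_sup_right ⟨ν g, trivial, rfl⟩)

namespace IsDedekindDomain.HeightOneSpectrum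

theorem finite_comap_eq (F : Type*) [Field F] [NumberField F] (v : HeightOneSpectrum (𝓞 F))
    (E : Type*) [Field E] [NumberField E] [Algebra F E] :
    Finite {w : HeightOneSpectrum (𝓞 E) //
      w.asIdeal.comap (algebraMap (𝓞 F) (𝓞 E)) = v.asIdeal} :=
  Finite.of_injective (β := v.asIdeal.primesOver (𝓞 E))
    (fun w => ⟨w.1.asIdeal, w.1.isPrime, ⟨w.2.symm⟩⟩)
    fun _ _ h => Subtype.ext (HeightOneSpectrum.ext (congrArg Subtype.val h))

-- The scoped instance `Valued.toNontriviallyNormedField` gives `E_w` the normed structure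
-- induced by its rank-one valuation, as required by the inverse function theorem.
open scoped Valued in
theorem map_pow_nhds_one_adicCompletion_units {E : Type*} [Field E] [NumberField E]
    (w : HeightOneSpectrum (𝓞 E)) {m : ℕ} (hm : m ≠ 0) :
    Filter.map (· ^ m) (𝓝 (1 : (w.adicCompletion E)ˣ)) = 𝓝 1 := by
  have : CharZero (w.adicCompletion E) :=
    charZero_of_injective_algebraMap (algebraMap E _).injective
  exact Units.map_pow_nhds_one (map_pow_nhds_one_of_natCast_ne_zero (Nat.cast_ne_zero.mpr hm))

end IsDedekindDomain.HeightOneSpectrum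

theorem LocalUnitsProd.map_pow_nhds_one (F : Type*) [Field F] [NumberField F]
    (v : HeightOneSpectrum (𝓞 F)) (E : Type*) [Field E] [NumberField E] [Algebra F E] (n : ℕ)
    {m : ℕ} (hm : m ≠ 0) :
    Filter.map (· ^ m) (𝓝 (1 : LocalUnitsProd F v E n)) = 𝓝 1 := by
  have := HeightOneSpectrum.finite_comap_eq F v E
  exact Units.map_pow_nhds_one_pi fun _ => Units.map_pow_nhds_one_pi fun w =>
    w.1.map_pow_nhds_one_adicCompletion_units hm

theorem open_subgroup_from_kernel_and_powers_general
    (F : Type*) [Field F] [NumberField F] (v : HeightOneSpectrum (𝓞 F))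
    (E : Type*) [Field E] [NumberField E] [Algebra F E]
    (n : ℕ) (l k : ℕ) (hl : 0 < l) (hk : 0 < k)
    (T : Type*) [CommGroup T] [TopologicalSpace T]
    (ν : LocalUnitsProd F v E n →* T) (μ : T →* LocalUnitsProd F v E n)
    (hν : Continuous ν) (hμ : Continuous μ)
    (hcomp : ∀ t : T, ν (μ t) = t ^ l)
    (C : Subgroup (LocalUnitsProd F v E n))
    (hCopen : ∃ U : Set (LocalUnitsProd F v E n),
      IsOpen U ∧ (C : Set (LocalUnitsProd F v E n)) = U ∩ (ν.ker : Set _)) :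
    IsOpen ((C ⊔ Subgroup.map (μ.comp (powMonoidHom k)) ⊤ :
      Subgroup (LocalUnitsProd F v E n)) : Set (LocalUnitsProd F v E n)) := by
  obtain ⟨U, hU, hCU⟩ := hCopen
  have hC : (C : Set (LocalUnitsProd F v E n)) ∈ 𝓝[ν.ker] 1 :=
    mem_nhdsWithin.mpr ⟨U, hU, (hCU.le C.one_mem).1, hCU.ge⟩
  exact Subgroup.isOpen_sup_map_pow (hμ.comp hν) hcomp
    (LocalUnitsProd.map_pow_nhds_one F v E n (Nat.mul_ne_zero hl.ne' hk.ne')).ge hC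

/-- Let `F` be a number field, `E/F` a finite extension, `𝔭` a finite place
of `F` and `l, k` positive integers.  Suppose `ν : ∏₁ⁿ E_𝔭^× → T(F_𝔭)` and
`μ : T(F_𝔭) → ∏₁ⁿ E_𝔭^×` are continuous group homomorphisms with `ν ∘ μ = [l]`
(the `l`-th power map), and `C` is an open subgroup of `ker ν`.  Then
`C · μ([k]T(F_𝔭))` is an open subgroup of `∏₁ⁿ E_𝔭^×` for the `𝔭`-adic topology. -/
theorem open_subgroup_from_kernel_and_powers
    (F : Type*) [Field F] [NumberField F] (v : HeightOneSpectrum (𝓞 F))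
    (E : Type*) [Field E] [NumberField E] [Algebra F E] [FiniteDimensional F E]
    (n : ℕ) (l k : ℕ) (hl : 0 < l) (hk : 0 < k)
    (T : Type*) [CommGroup T] [TopologicalSpace T] [IsTopologicalGroup T]
    (ν : LocalUnitsProd F v E n →* T) (μ : T →* LocalUnitsProd F v E n)
    (hν : Continuous ν) (hμ : Continuous μ)
    (hcomp : ∀ t : T, ν (μ t) = t ^ l)
    (C : Subgroup (LocalUnitsProd F v E n)) (hCker : C ≤ ν.ker)
    (hCopen : ∃ U : Set (LocalUnitsProd F v E n),
      IsOpen U ∧ (C : Set (LocalUnitsProd F v E n)) = U ∩ (ν.ker : Set _)) :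
    IsOpen ((C ⊔ Subgroup.map (μ.comp (powMonoidHom k)) ⊤ :
      Subgroup (LocalUnitsProd F v E n)) : Set (LocalUnitsProd F v E n)) :=
  open_subgroup_from_kernel_and_powers_general F v E n l k hl hk T ν μ hν hμ hcomp C hCopen
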